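/- Let Z : ℝ³ → ℝ³ be differentiable a.e. with |DZ(x)| ≤ ν max{L, λ} e^{x₃} a.e., and suppose Z is locally Lipschitz. Then for all y₁, y₂ ∈ B(0, r) and n ≥ 1: |Zⁿ(y₁) − Zⁿ(y₂)| ≤ ∏_{k=0}^{n−1} (sup_{x ∈ B(0,r)} ν max{L,λ} e^{p₃(Zᵏ(x))}) · |y₁ − y₂|. In particular, if νλ sup_{x∈B(0,r)} e^{p₃(Zⁿ(x))} = E^{n+1}(r) where E(t) = νλ e^t, then |Zⁿ(y₁) − Zⁿ(y₂)| ≤ (max{L,λ}/λ)ⁿ E(r) E²(r) ⋯ Eⁿ(r) |y₁ − y₂|. -/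

import Mathlib

/-!
Mollifying `Z` by a bump function `ψ` gives a smooth map with derivative `ψ ⋆ DZ`
(differentiation under the integral sign: `Z` is locally Lipschitz, hence differentiable a.e. by
Rademacher). So an a.e. bound `‖DZ‖ ≤ C` on an open convex set `U` passes to the mollified maps
along any segment of `U`, and letting the bump shrink gives `‖Z b - Z a‖ ≤ C ‖b - a‖` on `U`.
On the half-spaces `{x₃ < t}`, with `t ↓ max (a₃, b₃)`, this yields
`|Z a - Z b| ≤ ν max{L,λ} max (e^{a₃}, e^{b₃}) |a - b|`. On `Zᵏ(B(0,r))` the weight is at most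
`ν max{L,λ} sup_{B(0,r)} e^{p₃ ∘ Zᵏ}`, and the Lipschitz constants of the successive steps
multiply.
-/

open Finset MeasureTheory Filter Set Metric ContinuousLinearMap
open scoped NNReal Topology Convolution

theorem norm_integral_smul_le_of_ae_norm_le {α G : Type*} [MeasurableSpace α] {μ : Measure α}
    [NormedAddCommGroup G] [NormedSpace ℝ G] {ψ : α → ℝ} {f : α → G} {C : ℝ}
    (hψ0 : ∀ y, 0 ≤ ψ y) (hψi : Integrable ψ μ) (hψ1 : ∫ y, ψ y ∂μ = 1)
    (hf : ∀ᵐ y ∂μ, ψ y ≠ 0 → ‖f y‖ ≤ C) :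
    ‖∫ y, ψ y • f y ∂μ‖ ≤ C := by
  have hle : ∀ᵐ y ∂μ, ‖ψ y • f y‖ ≤ ψ y * C := by
    filter_upwards [hf] with y hy
    rcases eq_or_ne (ψ y) 0 with h0 | h0
    · simp [h0]
    · rw [norm_smul, Real.norm_of_nonneg (hψ0 y)]
      exact mul_le_mul_of_nonneg_left (hy h0) (hψ0 y)
  calc ‖∫ y, ψ y • f y ∂μ‖ ≤ ∫ y, ψ y * C ∂μ :=
        norm_integral_le_of_norm_le (hψi.mul_const C) hle
    _ = C := by rw [integral_mul_const, hψ1, one_mul]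

section FiniteIncrement

variable {E F : Type*} [NormedAddCommGroup E] [NormedSpace ℝ E] [FiniteDimensional ℝ E]
  [MeasurableSpace E] [BorelSpace E] {μ : Measure E} [μ.IsAddHaarMeasure]
  [NormedAddCommGroup F] [NormedSpace ℝ F] [FiniteDimensional ℝ F] {Z : E → F}

theorem LocallyLipschitz.ae_differentiableAt (hZ : LocallyLipschitz Z) :
    ∀ᵐ x ∂μ, DifferentiableAt ℝ Z x := by
  have hball : ∀ n : ℕ, ∀ᵐ x ∂μ, x ∈ ball (0 : E) n → DifferentiableAt ℝ Z x := by
    intro n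
    obtain ⟨K, hK⟩ := hZ.locallyLipschitzOn.exists_lipschitzOnWith_of_compact
      (isCompact_closedBall (0 : E) n)
    filter_upwards [hK.ae_differentiableWithinAt_of_mem] with x hx hxn
    exact (hx (ball_subset_closedBall hxn)).differentiableAt
      (mem_of_superset (isOpen_ball.mem_nhds hxn) ball_subset_closedBall)
  filter_upwards [ae_all_iff.2 hball] with x hx
  obtain ⟨n, hn⟩ := exists_nat_gt ‖x‖
  exact hx n (mem_ball_zero_iff.2 hn)

theorem LocallyLipschitz.hasFDerivAt_convolution_left {ψ : E → ℝ} (hψ : Continuous ψ)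
    (hψc : HasCompactSupport ψ) (hZ : LocallyLipschitz Z) (x₀ : E) :
    HasFDerivAt (ψ ⋆[lsmul ℝ ℝ, μ] Z) (∫ y, ψ y • fderiv ℝ Z (x₀ - y) ∂μ) x₀ := by
  obtain ⟨R, hR⟩ := hψc.isCompact.isBounded.subset_closedBall 0
  obtain ⟨P, hP⟩ := hZ.locallyLipschitzOn.exists_lipschitzOnWith_of_compact
    (isCompact_closedBall x₀ (1 + R))
  have hZc : Continuous Z := hZ.continuous
  have hconv : (ψ ⋆[lsmul ℝ ℝ, μ] Z) = fun x => ∫ y, ψ y • Z (x - y) ∂μ := by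
    ext x; simp [convolution_def]
  have hlip : ∀ y,
      LipschitzOnWith (Real.nnabs (ψ y * P)) (fun x => ψ y • Z (x - y)) (ball x₀ 1) := by
    intro y
    refine LipschitzOnWith.of_dist_le_mul fun x hx x' hx' => ?_
    rcases eq_or_ne (ψ y) 0 with h0 | h0
    · simp [h0]
    have hy : ‖y‖ ≤ R := mem_closedBall_zero_iff.1 (hR (subset_tsupport _ h0))
    have hmem : ∀ z ∈ ball x₀ 1, z - y ∈ closedBall x₀ (1 + R) := fun z hz => by
      rw [mem_closedBall, dist_eq_norm, sub_sub, add_comm y, ← sub_sub]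
      exact (norm_sub_le _ _).trans (add_le_add (mem_ball_iff_norm.1 hz).le hy)
    rw [dist_smul₀, Real.coe_nnabs, abs_mul, NNReal.abs_eq, mul_assoc, Real.norm_eq_abs]
    gcongr
    simpa using hP.dist_le_mul _ (hmem x hx) _ (hmem x' hx')
  have hdiff : ∀ᵐ y ∂μ, DifferentiableAt ℝ Z (x₀ - y) :=
    (Measure.measurePreserving_sub_left μ x₀).quasiMeasurePreserving.ae hZ.ae_differentiableAt
  rw [hconv]
  refine (hasFDerivAt_integral_of_dominated_loc_of_lip (ball_mem_nhds x₀ one_pos)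
    (Eventually.of_forall fun x =>
      (by fun_prop : Continuous fun y => ψ y • Z (x - y)).aestronglyMeasurable)
    ((by fun_prop : Continuous fun y => ψ y • Z (x₀ - y)).integrable_of_hasCompactSupport
      hψc.smul_right)
    (hψ.aestronglyMeasurable.smul
      ((measurable_fderiv ℝ Z).comp (measurable_const.sub measurable_id)).aestronglyMeasurable)
    (Eventually.of_forall hlip) ((hψ.integrable_of_hasCompactSupport hψc).mul_const _)
    ?_).2
  filter_upwards [hdiff] with y hy
  exact (hy.hasFDerivAt.comp x₀ ((hasFDerivAt_id x₀).sub_const y)).const_smul (ψ y)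

theorem Convex.norm_image_sub_le_of_ae_norm_fderiv_le {U : Set E} {C : ℝ} {a b : E}
    (hU : Convex ℝ U) (hUo : IsOpen U) (hZ : LocallyLipschitz Z)
    (hder : ∀ᵐ x ∂μ, x ∈ U → ‖fderiv ℝ Z x‖ ≤ C) (ha : a ∈ U) (hb : b ∈ U) :
    ‖Z b - Z a‖ ≤ C * ‖b - a‖ := by
  have hseg : IsCompact (segment ℝ a b) := by
    rw [← convexHull_pair]; exact (toFinite _).isCompact_convexHull ℝ
  obtain ⟨δ, hδ, hδU⟩ := hseg.exists_cthickening_subset_open hUo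
    (hU.segment_subset ha hb)
  let φ : ℕ → ContDiffBump (0 : E) := fun n =>
    ⟨δ / (n + 2), δ / (n + 1), by positivity, by gcongr; linarith⟩
  have hφ : Tendsto (fun n => (φ n).rOut) atTop (𝓝 0) := by
    have := (tendsto_const_div_atTop_nhds_zero_nat δ).comp (tendsto_add_atTop_nat 1)
    simpa [φ, Function.comp_def] using this
  let g : ℕ → E → F := fun n => (φ n).normed μ ⋆[lsmul ℝ ℝ, μ] Z
  have hg : ∀ n, ‖g n b - g n a‖ ≤ C * ‖b - a‖ := by
    intro n
    refine (convex_segment a b).norm_image_sub_le_of_norm_hasFDerivWithin_le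
      (fun w _ => (hZ.hasFDerivAt_convolution_left (φ n).continuous_normed
        (φ n).hasCompactSupport_normed w).hasFDerivWithinAt) (fun w hw => ?_)
      (left_mem_segment ℝ a b) (right_mem_segment ℝ a b)
    refine norm_integral_smul_le_of_ae_norm_le (φ n).nonneg_normed (φ n).integrable_normed
      (φ n).integral_normed ?_
    filter_upwards [(Measure.measurePreserving_sub_left μ w).quasiMeasurePreserving.ae hder]
      with y hy hψy
    have hyδ : ‖y‖ < δ := by
      have : y ∈ ball (0 : E) (φ n).rOut := (φ n).support_normed_eq (μ := μ) ▸ hψy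
      exact (mem_ball_zero_iff.1 this).trans_le
        (div_le_self hδ.le (by linarith [(n.cast_nonneg : (0 : ℝ) ≤ n)]))
    refine hy (hδU (mem_cthickening_of_dist_le _ w _ _ hw ?_))
    simpa [dist_eq_norm] using hyδ.le
  have hlim : ∀ x, Tendsto (g · x) atTop (𝓝 (Z x)) := fun x =>
    ContDiffBump.convolution_tendsto_right_of_continuous hφ hZ.continuous x
  exact le_of_tendsto' ((hlim b).sub (hlim a)).norm hg

theorem LocallyLipschitz.dist_le_max_mul_dist_of_ae_norm_fderiv_le {w : E → ℝ}
    (hZ : LocallyLipschitz Z) (hw : QuasiconvexOn ℝ univ w) (hwc : UpperSemicontinuous w)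
    (hder : ∀ᵐ x ∂μ, ‖fderiv ℝ Z x‖ ≤ w x) (a b : E) :
    dist (Z a) (Z b) ≤ max (w a) (w b) * dist a b := by
  have hlevel : ∀ t ∈ Ioi (max (w a) (w b)), dist (Z a) (Z b) ≤ t * dist a b := by
    intro t ht
    have hconv : Convex ℝ {x | w x < t} := by simpa using hw.convex_lt t
    rw [dist_eq_norm, dist_eq_norm]
    exact hconv.norm_image_sub_le_of_ae_norm_fderiv_le (hwc.isOpen_preimage t) hZ
      (hder.mono fun x hx hxt => hx.trans hxt.le)
      (show w b < t from (le_max_right _ _).trans_lt ht)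
      (show w a < t from (le_max_left _ _).trans_lt ht)
  exact ge_of_tendsto ((continuous_id.mul continuous_const).tendsto _ |>.mono_left
    nhdsWithin_le_nhds) (eventually_nhdsWithin_of_forall hlevel)

end FiniteIncrement

theorem LipschitzOnWith.iterate_of_image {α : Type*} [PseudoEMetricSpace α] {f : α → α}
    {s : Set α} {K : ℕ → ℝ≥0} (h : ∀ k, LipschitzOnWith (K k) f (f^[k] '' s)) (n : ℕ) :
    LipschitzOnWith (∏ k ∈ Finset.range n, K k) f^[n] s := by
  induction n with
  | zero => simpa using LipschitzWith.id.lipschitzOnWith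
  | succ n ih =>
    rw [Function.iterate_succ', Finset.prod_range_succ, mul_comm]
    exact (h n).comp ih (mapsTo_image _ _)

theorem dist_iterate_le_prod_of_dist_le_max_mul {α : Type*} [PseudoMetricSpace α] {f : α → α}
    {w : α → ℝ} {s : Set α} {S : ℕ → ℝ}
    (hf : ∀ a b, dist (f a) (f b) ≤ max (w a) (w b) * dist a b)
    (hS : ∀ k, ∀ x ∈ s, w (f^[k] x) ≤ S k) (hS0 : ∀ k, 0 ≤ S k)
    {x y : α} (hx : x ∈ s) (hy : y ∈ s) (n : ℕ) :
    dist (f^[n] x) (f^[n] y) ≤ (∏ k ∈ Finset.range n, S k) * dist x y := by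
  have hstep : ∀ k, LipschitzOnWith (S k).toNNReal f (f^[k] '' s) := by
    refine fun k => LipschitzOnWith.of_dist_le' ?_
    rintro _ ⟨a, ha, rfl⟩ _ ⟨b, hb, rfl⟩
    exact (hf _ _).trans
      (mul_le_mul_of_nonneg_right (max_le (hS k a ha) (hS k b hb)) dist_nonneg)
  simpa [NNReal.coe_prod, Real.coe_toNNReal _ (hS0 _)] using
    (LipschitzOnWith.iterate_of_image hstep n).dist_le_mul x hx y hy

theorem Continuous.le_csSup_image_of_isBounded {α : Type*} [PseudoMetricSpace α] [ProperSpace α]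
    {f : α → ℝ} {s : Set α} {x : α} (hf : Continuous f) (hs : Bornology.IsBounded s)
    (hx : x ∈ s) : f x ≤ sSup (f '' s) :=
  le_csSup ((hs.isCompact_closure.bddAbove_image hf.continuousOn).mono (image_mono subset_closure))
    (mem_image_of_mem f hx)

theorem EuclideanSpace.quasiconvexOn_mul_exp_apply {ι : Type*} [Fintype ι] {c : ℝ} (hc : 0 ≤ c)
    (i : ι) : QuasiconvexOn ℝ univ fun x : EuclideanSpace ℝ ι => c * Real.exp (x i) := by
  simpa using
    ((convexOn_exp.comp_linearMap (EuclideanSpace.proj i).toLinearMap).smul hc).quasiconvexOn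

theorem stmt15_general (ν lam L r : ℝ) (hν : 0 < ν) (hlam : 0 < lam)
    (Z : EuclideanSpace ℝ (Fin 3) → EuclideanSpace ℝ (Fin 3))
    (hlip : LocallyLipschitz Z)
    (hder : ∀ᵐ x : EuclideanSpace ℝ (Fin 3) ∂volume,
      ‖fderiv ℝ Z x‖ ≤ ν * max L lam * Real.exp (x 2)) :
    (∀ y₁ ∈ Metric.ball (0 : EuclideanSpace ℝ (Fin 3)) r, ∀ y₂ ∈ Metric.ball
        (0 : EuclideanSpace ℝ (Fin 3)) r, ∀ n : ℕ,
      dist (Z^[n] y₁) (Z^[n] y₂)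
        ≤ (∏ k ∈ Finset.range n, ν * max L lam *
            sSup ((fun x => Real.exp (Z^[k] x 2)) ''
              Metric.ball (0 : EuclideanSpace ℝ (Fin 3)) r)) * dist y₁ y₂) ∧
      ((∀ n : ℕ, ν * lam * sSup ((fun x => Real.exp (Z^[n] x 2)) ''
          Metric.ball (0 : EuclideanSpace ℝ (Fin 3)) r)
          = (fun t : ℝ => ν * lam * Real.exp t)^[n + 1] r) →
        ∀ y₁ ∈ Metric.ball (0 : EuclideanSpace ℝ (Fin 3)) r, ∀ y₂ ∈ Metric.ball
            (0 : EuclideanSpace ℝ (Fin 3)) r, ∀ n : ℕ,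
          dist (Z^[n] y₁) (Z^[n] y₂)
            ≤ (max L lam / lam) ^ n *
              (∏ k ∈ Finset.range n, (fun t : ℝ => ν * lam * Real.exp t)^[k + 1] r) *
              dist y₁ y₂) := by
  set c := ν * max L lam
  have hc : 0 ≤ c := by positivity
  have hcoord : Continuous fun x : EuclideanSpace ℝ (Fin 3) => x 2 :=
    (EuclideanSpace.proj (2 : Fin 3)).continuous
  have hstep := hlip.dist_le_max_mul_dist_of_ae_norm_fderiv_le
    (EuclideanSpace.quasiconvexOn_mul_exp_apply hc 2)
    (continuous_const.mul (Real.continuous_exp.comp hcoord)).upperSemicontinuous hder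
  have hsup : ∀ k, ∀ x ∈ ball (0 : EuclideanSpace ℝ (Fin 3)) r,
      c * Real.exp (Z^[k] x 2) ≤ c * sSup ((fun x => Real.exp (Z^[k] x 2)) '' ball 0 r) :=
    fun k x hx => mul_le_mul_of_nonneg_left ((Real.continuous_exp.comp
      (hcoord.comp (hlip.continuous.iterate k))).le_csSup_image_of_isBounded isBounded_ball hx) hc
  have hsup0 : ∀ k, 0 ≤ c * sSup ((fun x => Real.exp (Z^[k] x 2)) '' ball 0 r) :=
    fun k => mul_nonneg hc (Real.sSup_nonneg fun _ ⟨_, _, hx⟩ => hx ▸ (Real.exp_pos _).le)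
  have hiter := fun y₁ (h₁ : y₁ ∈ ball 0 r) y₂ (h₂ : y₂ ∈ ball 0 r) n =>
    dist_iterate_le_prod_of_dist_le_max_mul hstep hsup hsup0 h₁ h₂ n
  refine ⟨hiter, fun hE y₁ h₁ y₂ h₂ n => ?_⟩
  have hfactor : ∀ k, c * sSup ((fun x => Real.exp (Z^[k] x 2)) '' ball 0 r)
      = max L lam / lam * (fun t : ℝ => ν * lam * Real.exp t)^[k + 1] r := by
    intro k
    rw [← hE k]
    simp only [c]
    field_simp
  rw [mul_assoc]
  simpa only [hfactor, Finset.prod_mul_distrib, Finset.prod_const, Finset.card_range, mul_assoc]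
    using hiter y₁ h₁ y₂ h₂ n

/-- Finite-increment estimate for iterates of a locally Lipschitz map `Z : ℝ³ → ℝ³` with
`‖DZ(x)‖ ≤ ν max{L,λ} e^{x₃}` a.e.: for `y₁, y₂ ∈ B(0,r)`,
`|Zⁿ(y₁) − Zⁿ(y₂)| ≤ ∏_{k<n} (sup_{B(0,r)} ν max{L,λ} e^{p₃(Zᵏ·)}) |y₁ − y₂|`, and if
`νλ sup_{B(0,r)} e^{p₃(Zⁿ·)} = E^{n+1}(r)` with `E(t) = νλe^t`, then
`|Zⁿ(y₁) − Zⁿ(y₂)| ≤ (max{L,λ}/λ)ⁿ E(r)⋯Eⁿ(r) |y₁ − y₂|`. -/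
theorem stmt15 (ν lam L r : ℝ) (hν : 0 < ν) (hlam : 0 < lam) (hL : 0 < L) (hr : 0 < r)
    (Z : EuclideanSpace ℝ (Fin 3) → EuclideanSpace ℝ (Fin 3))
    (hlip : LocallyLipschitz Z)
    (hder : ∀ᵐ x : EuclideanSpace ℝ (Fin 3) ∂volume,
      ‖fderiv ℝ Z x‖ ≤ ν * max L lam * Real.exp (x 2)) :
    (∀ y₁ ∈ Metric.ball (0 : EuclideanSpace ℝ (Fin 3)) r, ∀ y₂ ∈ Metric.ball
        (0 : EuclideanSpace ℝ (Fin 3)) r, ∀ n : ℕ,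
      dist (Z^[n] y₁) (Z^[n] y₂)
        ≤ (∏ k ∈ Finset.range n, ν * max L lam *
            sSup ((fun x => Real.exp (Z^[k] x 2)) ''
              Metric.ball (0 : EuclideanSpace ℝ (Fin 3)) r)) * dist y₁ y₂) ∧
      ((∀ n : ℕ, ν * lam * sSup ((fun x => Real.exp (Z^[n] x 2)) ''
          Metric.ball (0 : EuclideanSpace ℝ (Fin 3)) r)
          = (fun t : ℝ => ν * lam * Real.exp t)^[n + 1] r) →
        ∀ y₁ ∈ Metric.ball (0 : EuclideanSpace ℝ (Fin 3)) r, ∀ y₂ ∈ Metric.ball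
            (0 : EuclideanSpace ℝ (Fin 3)) r, ∀ n : ℕ,
          dist (Z^[n] y₁) (Z^[n] y₂)
            ≤ (max L lam / lam) ^ n *
              (∏ k ∈ Finset.range n, (fun t : ℝ => ν * lam * Real.exp t)^[k + 1] r) *
              dist y₁ y₂) :=
  stmt15_general ν lam L r hν hlam Z hlip hder
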